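/- Let u : [0,∞) → ℝ be differentiable and nonnegative with u'(t) ≤ -K u(t) + C u(t)^{3/2} for positive constants K, C. If u(0) < (K/(2C))², then u(t) ≤ u(0) e^{-Kt/2} for all t ≥ 0 (exponential decay for small initial data in nonlinear energy estimates). -/

import Mathlib

/-!
On any interval where `u < (K/(2C))²` we have `C u^{3/2} ≤ (K/2) u`, so `u' ≤ -(K/2) u` and
Grönwall gives `u(t) ≤ u(0) e^{-Kt/2} ≤ u(0)`. Hence `u` can never reach the threshold
`(K/(2C))²`: at the first time it did, this bound would already keep it strictly below.
-/

open Set Real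

theorem Continuous.forall_lt_of_forall_Ico_lt {α β : Type*} [ConditionallyCompleteLinearOrder α]
    [TopologicalSpace α] [OrderTopology α] [LinearOrder β] [TopologicalSpace β]
    [OrderClosedTopology β] {u : α → β} {a : α} {B : β} (hu : Continuous u)
    (hstep : ∀ b, a ≤ b → (∀ x ∈ Ico a b, u x < B) → u b < B) :
    ∀ t, a ≤ t → u t < B := by
  by_contra! ⟨t, hat, hBt⟩
  set S := Ici a ∩ u ⁻¹' Ici B
  have hbdd : BddBelow S := ⟨a, fun x hx => hx.1⟩
  obtain ⟨has, hBs⟩ : sInf S ∈ S :=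
    (isClosed_Ici.inter (isClosed_Ici.preimage hu)).csInf_mem ⟨t, hat, hBt⟩ hbdd
  refine (hstep (sInf S) has fun x hx => ?_).not_ge hBs
  by_contra! hBx
  exact (csInf_le hbdd ⟨hx.1, hBx⟩).not_gt hx.2

theorem le_mul_exp_of_deriv_le_neg_mul {u u' : ℝ → ℝ} {c a b : ℝ}
    (hu : ContinuousOn u (Icc a b)) (hu' : ∀ x ∈ Ico a b, HasDerivWithinAt u (u' x) (Ici x) x)
    (hbound : ∀ x ∈ Ico a b, u' x ≤ -c * u x) :
    ∀ x ∈ Icc a b, u x ≤ u a * exp (-c * (x - a)) := by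
  intro x hx
  have := le_gronwallBound_of_liminf_deriv_right_le hu
    (fun x hx _ hr => (hu' x hx).liminf_right_slope_le hr) le_rfl
    (fun x hx => (hbound x hx).trans_eq (add_zero _).symm) x hx
  rwa [gronwallBound_ε0] at this

theorem mul_rpow_three_halves_le {K C x : ℝ} (hK : 0 ≤ K) (hC : 0 < C) (hx : 0 ≤ x)
    (hxK : x ≤ (K / (2 * C)) ^ 2) :
    C * x ^ (3 / 2 : ℝ) ≤ K / 2 * x := by
  have hsqrt : √x ≤ K / (2 * C) := (sqrt_le_left (by positivity)).2 hxK
  calc C * x ^ (3 / 2 : ℝ) = C * √x * x := by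
        rw [show (3 / 2 : ℝ) = 1 / 2 + 1 by norm_num, rpow_add' hx (by norm_num), rpow_one,
          sqrt_eq_rpow, mul_assoc]
    _ ≤ C * (K / (2 * C)) * x := by gcongr
    _ = K / 2 * x := by field_simp

/-- exponential decay for the nonlinear differential inequality
`u' ≤ -Ku + Cu^{3/2}` when `u(0) < (K/(2C))²`. -/
theorem exp_decay_of_nonlinear_ode
    (u : ℝ → ℝ) (K C : ℝ) (hK : 0 < K) (hC : 0 < C)
    (hdiff : Differentiable ℝ u)
    (hnonneg : ∀ t, 0 ≤ t → 0 ≤ u t)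
    (hode : ∀ t, 0 ≤ t → deriv u t ≤ -K * u t + C * u t ^ ((3 : ℝ) / 2))
    (hsmall : u 0 < (K / (2 * C)) ^ 2) :
    ∀ t, 0 ≤ t → u t ≤ u 0 * Real.exp (-K * t / 2) := by
  have decay : ∀ b, (∀ x ∈ Ico 0 b, u x < (K / (2 * C)) ^ 2) →
      ∀ x ∈ Icc 0 b, u x ≤ u 0 * exp (-(K / 2) * (x - 0)) :=
    fun b hb => le_mul_exp_of_deriv_le_neg_mul hdiff.continuous.continuousOn
      (fun x _ => (hdiff x).hasDerivAt.hasDerivWithinAt) fun x hx => by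
        have := mul_rpow_three_halves_le hK.le hC (hnonneg x hx.1) (hb x hx).le
        linarith [hode x hx.1]
  have below : ∀ t, 0 ≤ t → u t < (K / (2 * C)) ^ 2 :=
    hdiff.continuous.forall_lt_of_forall_Ico_lt fun b hb hlt => by
      have hexp : exp (-(K / 2) * (b - 0)) ≤ 1 := exp_le_one_iff.2 (by nlinarith)
      calc u b ≤ u 0 * exp (-(K / 2) * (b - 0)) := decay b hlt b ⟨hb, le_rfl⟩
        _ ≤ u 0 := mul_le_of_le_one_right (hnonneg 0 le_rfl) hexp
        _ < (K / (2 * C)) ^ 2 := hsmall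
  intro t ht
  convert decay t (fun x hx => below x hx.1) t ⟨ht, le_rfl⟩ using 3
  ring
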